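/- arXiv:2211.07816 — 2 statements merged into one kernel-verified Lean document; each statement's English description precedes it below -/
import Mathlib

section
/- (Main theorem: generalization error bound under label noise.) Let ν be a probability measure on a measurable space 𝒳, let q (the ground-truth conditional label distribution) and p_1, …, p_N (the N clients' possibly noisy conditional label distributions) be conditional label distributions over ν, let n_1, …, n_N > 0 with n = ∑_{k=1}^{N} n_k, and let f be a measurable classifier satisfying |f x i| ≤ Ω for all x ∈ 𝒳 and all i, where Ω ≥ 0. Then the generalization error of f satisfies | ∑_{k=1}^{N} (n_k/n) L(f, p_k) − L(f, q) | ≤ Ω · ∑_{k=1}^{N} (n_k/n) ∫_𝒳 ∑_{i=1}^{C} | p_k x i − q x i | dν(x). -/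
open MeasureTheory Real

/-- The cross-entropy loss of classifier `f` at point `(x, i)`:
`ℓ_f(x, i) = log (∑ r, exp (f x r)) − f x i`. -/
noncomputable def crossEntropyLoss {𝒳 : Type*} {C : ℕ} (f : 𝒳 → Fin C → ℝ)
    (x : 𝒳) (i : Fin C) : ℝ :=
  Real.log (∑ r, Real.exp (f x r)) - f x i

/-- The risk of classifier `f` under feature distribution `ν` and conditional label
distribution `p`: `L(f, p) = ∫ ∑ i, p x i · ℓ_f(x, i) dν(x)`. -/
noncomputable def risk {𝒳 : Type*} [MeasurableSpace 𝒳] {C : ℕ} (ν : Measure 𝒳)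
    (f : 𝒳 → Fin C → ℝ) (p : 𝒳 → Fin C → ℝ) : ℝ :=
  ∫ x, ∑ i, p x i * crossEntropyLoss f x i ∂ν

/-! Since `p k` and `q` both sum to one, the log-partition term `log ∑ r, exp (f x r)` of the
cross-entropy cancels in `L(f, p k) - L(f, q)`, leaving `∫ ∑ i, (q x i - p k x i) f x i`, which
is at most `Ω ∫ ∑ i, |p k x i - q x i|` in absolute value. The bound for the weighted average
follows by the triangle inequality, as the weights `n k / n` are a probability vector.
Boundedness of `f` also bounds the loss, which gives all the integrability needed. -/

lemma abs_log_sum_exp_le {ι : Type*} [Fintype ι] {g : ι → ℝ} {Ω : ℝ} (hΩ : 0 ≤ Ω)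
    (hg : ∀ i, |g i| ≤ Ω) : |log (∑ i, exp (g i))| ≤ log (Fintype.card ι) + Ω := by
  rcases isEmpty_or_nonempty ι with hι | hι
  · simpa using hΩ
  have hcard : (0 : ℝ) < Fintype.card ι := by exact_mod_cast Fintype.card_pos
  have hlower : (Fintype.card ι : ℝ) * exp (-Ω) ≤ ∑ i, exp (g i) := by
    rw [← nsmul_eq_mul, ← Finset.card_univ]
    exact Finset.card_nsmul_le_sum _ _ _ fun i _ => exp_le_exp.mpr (neg_le_of_abs_le (hg i))
  have hupper : ∑ i, exp (g i) ≤ (Fintype.card ι : ℝ) * exp Ω := by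
    rw [← nsmul_eq_mul, ← Finset.card_univ]
    exact Finset.sum_le_card_nsmul _ _ _ fun i _ => exp_le_exp.mpr (le_of_abs_le (hg i))
  have hlog_lower := log_le_log (by positivity) hlower
  have hlog_upper := log_le_log (hlower.trans_lt' (by positivity)) hupper
  rw [log_mul hcard.ne' (exp_ne_zero _), log_exp] at hlog_lower hlog_upper
  have hlog_card : 0 ≤ log (Fintype.card ι) := log_nonneg (by exact_mod_cast Fintype.card_pos)
  exact abs_le.mpr ⟨by linarith, hlog_upper⟩

section CrossEntropy

variable {𝒳 : Type*} {C : ℕ} {f : 𝒳 → Fin C → ℝ}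

lemma abs_crossEntropyLoss_le {Ω : ℝ} (hΩ : 0 ≤ Ω) (hB : ∀ x i, |f x i| ≤ Ω) (x : 𝒳)
    (i : Fin C) : |crossEntropyLoss f x i| ≤ log C + 2 * Ω := by
  have := abs_log_sum_exp_le hΩ (hB x)
  rw [Fintype.card_fin] at this
  calc |crossEntropyLoss f x i| ≤ |log (∑ r, exp (f x r))| + |f x i| := abs_sub _ _
    _ ≤ log C + 2 * Ω := by linarith [hB x i]

lemma measurable_crossEntropyLoss [MeasurableSpace 𝒳] (hf : Measurable f) (i : Fin C) :
    Measurable fun x => crossEntropyLoss f x i :=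
  (Finset.measurable_sum _ fun r _ => ((measurable_pi_apply r).comp hf).exp).log.sub
    ((measurable_pi_apply i).comp hf)

lemma sum_mul_crossEntropyLoss_sub_sum_mul {a b : Fin C → ℝ} (h : ∑ i, a i = ∑ i, b i)
    (x : 𝒳) :
    ∑ i, a i * crossEntropyLoss f x i - ∑ i, b i * crossEntropyLoss f x i
      = ∑ i, (b i - a i) * f x i := by
  simp only [crossEntropyLoss, mul_sub, Finset.sum_sub_distrib, ← Finset.sum_mul, h, sub_mul]
  ring

end CrossEntropy

lemma abs_sum_mul_le_mul_sum_abs {ι : Type*} (s : Finset ι) {c g : ι → ℝ} {Ω : ℝ}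
    (hg : ∀ i ∈ s, |g i| ≤ Ω) : |∑ i ∈ s, c i * g i| ≤ Ω * ∑ i ∈ s, |c i| := by
  rw [Finset.mul_sum]
  refine (Finset.abs_sum_le_sum_abs _ _).trans (Finset.sum_le_sum fun i hi => ?_)
  rw [abs_mul, mul_comm]
  exact mul_le_mul_of_nonneg_right (hg i hi) (abs_nonneg _)

lemma abs_sum_mul_sub_le_sum_mul_abs_sub {κ : Type*} (s : Finset κ) {w a : κ → ℝ} (b : ℝ)
    (hw0 : ∀ k ∈ s, 0 ≤ w k) (hw1 : ∑ k ∈ s, w k = 1) :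
    |∑ k ∈ s, w k * a k - b| ≤ ∑ k ∈ s, w k * |a k - b| := by
  calc |∑ k ∈ s, w k * a k - b| = |∑ k ∈ s, w k * (a k - b)| := by
        simp only [mul_sub, Finset.sum_sub_distrib, ← Finset.sum_mul, hw1, one_mul]
    _ ≤ ∑ k ∈ s, |w k * (a k - b)| := Finset.abs_sum_le_sum_abs _ _
    _ = ∑ k ∈ s, w k * |a k - b| := Finset.sum_congr rfl fun k hk => by
        rw [abs_mul, abs_of_nonneg (hw0 k hk)]

structure IsLabelDistribution {𝒳 ι : Type*} [MeasurableSpace 𝒳] [Fintype ι] (ν : Measure 𝒳)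
    (p : 𝒳 → ι → ℝ) : Prop where
  measurable : Measurable p
  nonneg : ∀ x i, 0 ≤ p x i
  ae_sum_eq_one : ∀ᵐ x ∂ν, ∑ i, p x i = 1

namespace IsLabelDistribution

variable {𝒳 ι : Type*} [MeasurableSpace 𝒳] [Fintype ι] {ν : Measure 𝒳} [IsFiniteMeasure ν]
  {p q : 𝒳 → ι → ℝ}

lemma integrable_apply (hp : IsLabelDistribution ν p) (i : ι) :
    Integrable (fun x => p x i) ν := by
  refine .of_bound ((measurable_pi_apply i).comp hp.measurable).aestronglyMeasurable 1 ?_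
  filter_upwards [hp.ae_sum_eq_one] with x hx
  rw [norm_of_nonneg (hp.nonneg x i), ← hx]
  exact Finset.single_le_sum (fun j _ => hp.nonneg x j) (Finset.mem_univ i)

lemma integrable_sum_mul (hp : IsLabelDistribution ν p) {g : 𝒳 → ι → ℝ}
    (hg : ∀ i, Measurable fun x => g x i) {M : ℝ} (hgM : ∀ x i, |g x i| ≤ M) :
    Integrable (fun x => ∑ i, p x i * g x i) ν :=
  integrable_finsetSum _ fun i _ =>
    (hp.integrable_apply i).mul_bdd (hg i).aestronglyMeasurable (.of_forall (hgM · i))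

lemma integrable_sum_abs_sub (hp : IsLabelDistribution ν p) (hq : IsLabelDistribution ν q) :
    Integrable (fun x => ∑ i, |p x i - q x i|) ν :=
  integrable_finsetSum _ fun i _ => ((hp.integrable_apply i).sub (hq.integrable_apply i)).abs

end IsLabelDistribution

theorem abs_risk_sub_risk_le {𝒳 : Type*} [MeasurableSpace 𝒳] {C : ℕ} {ν : Measure 𝒳}
    [IsFiniteMeasure ν] {p q : 𝒳 → Fin C → ℝ} (hp : IsLabelDistribution ν p)
    (hq : IsLabelDistribution ν q) {f : 𝒳 → Fin C → ℝ} (hf : Measurable f) {Ω : ℝ}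
    (hΩ : 0 ≤ Ω) (hB : ∀ x i, |f x i| ≤ Ω) :
    |risk ν f p - risk ν f q| ≤ Ω * ∫ x, ∑ i, |p x i - q x i| ∂ν := by
  have hloss := abs_crossEntropyLoss_le hΩ hB
  rw [risk, risk, ← integral_sub (hp.integrable_sum_mul (measurable_crossEntropyLoss hf) hloss)
    (hq.integrable_sum_mul (measurable_crossEntropyLoss hf) hloss), ← integral_const_mul,
    ← norm_eq_abs]
  refine norm_integral_le_of_norm_le ((hp.integrable_sum_abs_sub hq).const_mul Ω) ?_
  filter_upwards [hp.ae_sum_eq_one, hq.ae_sum_eq_one] with x hpx hqx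
  rw [sum_mul_crossEntropyLoss_sub_sum_mul (hpx.trans hqx.symm), norm_eq_abs]
  refine (abs_sum_mul_le_mul_sum_abs Finset.univ fun i _ => hB x i).trans_eq ?_
  simp_rw [abs_sub_comm (q x _)]

theorem generalization_error_bound_general
    {𝒳 : Type*} [MeasurableSpace 𝒳] {C : ℕ}
    (ν : Measure 𝒳) [IsProbabilityMeasure ν]
    (N : ℕ) (hN : 1 ≤ N)
    (p : Fin N → 𝒳 → Fin C → ℝ) (q : 𝒳 → Fin C → ℝ)
    (hpm : ∀ k, Measurable (p k)) (hqm : Measurable q)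
    (hp0 : ∀ k x i, 0 ≤ p k x i) (hq0 : ∀ x i, 0 ≤ q x i)
    (hp1 : ∀ k, ∀ᵐ x ∂ν, ∑ i, p k x i = 1) (hq1 : ∀ᵐ x ∂ν, ∑ i, q x i = 1)
    (n : Fin N → ℕ) (hn : ∀ k, 0 < n k)
    (f : 𝒳 → Fin C → ℝ) (hf : Measurable f)
    (Ω : ℝ) (hΩ : 0 ≤ Ω) (hB : ∀ x i, |f x i| ≤ Ω) :
    |∑ k, ((n k : ℝ) / (∑ j, (n j : ℝ))) * risk ν f (p k) - risk ν f q|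
      ≤ Ω * ∑ k, ((n k : ℝ) / (∑ j, (n j : ℝ))) *
          ∫ x, ∑ i, |p k x i - q x i| ∂ν := by
  set w : Fin N → ℝ := fun k => (n k : ℝ) / ∑ j, (n j : ℝ)
  have hn_sum : 0 < ∑ j, (n j : ℝ) :=
    Finset.sum_pos (fun j _ => by exact_mod_cast hn j) ⟨⟨0, hN⟩, Finset.mem_univ _⟩
  have hw0 : ∀ k ∈ Finset.univ, 0 ≤ w k := fun k _ => by positivity
  have hw1 : ∑ k, w k = 1 := by rw [← Finset.sum_div, div_self hn_sum.ne']
  have hq : IsLabelDistribution ν q := ⟨hqm, hq0, hq1⟩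
  calc |∑ k, w k * risk ν f (p k) - risk ν f q|
      ≤ ∑ k, w k * |risk ν f (p k) - risk ν f q| :=
        abs_sum_mul_sub_le_sum_mul_abs_sub _ _ hw0 hw1
    _ ≤ ∑ k, w k * (Ω * ∫ x, ∑ i, |p k x i - q x i| ∂ν) := by
        gcongr with k
        exact abs_risk_sub_risk_le ⟨hpm k, hp0 k, hp1 k⟩ hq hf hΩ hB
    _ = Ω * ∑ k, w k * ∫ x, ∑ i, |p k x i - q x i| ∂ν := by
        rw [Finset.mul_sum]
        exact Finset.sum_congr rfl fun k _ => by ring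

/-- **Theorem (generalization error bound under label noise).**
All `N` clients share the feature distribution `ν`; client `k` has (possibly noisy)
conditional label distribution `p k` and `n k > 0` data points; `q` is the ground-truth
conditional label distribution; the classifier `f` is measurable with `|f x i| ≤ Ω`.
Then the generalization error, i.e., the absolute difference between the empirical risk
`∑ k, (n k / n) L(f, p k)` of the global model and its ground-truth risk `L(f, q)`, is at
most `Ω · ∑ k, (n k / n) ∫ ∑ i, |p k x i − q x i| dν(x)`. -/
theorem generalization_error_bound
    {𝒳 : Type*} [MeasurableSpace 𝒳] {C : ℕ} (hC : 1 ≤ C)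
    (ν : Measure 𝒳) [IsProbabilityMeasure ν]
    (N : ℕ) (hN : 1 ≤ N)
    (p : Fin N → 𝒳 → Fin C → ℝ) (q : 𝒳 → Fin C → ℝ)
    (hpm : ∀ k, Measurable (p k)) (hqm : Measurable q)
    (hp0 : ∀ k x i, 0 ≤ p k x i) (hq0 : ∀ x i, 0 ≤ q x i)
    (hp1 : ∀ k, ∀ᵐ x ∂ν, ∑ i, p k x i = 1) (hq1 : ∀ᵐ x ∂ν, ∑ i, q x i = 1)
    (n : Fin N → ℕ) (hn : ∀ k, 0 < n k)
    (f : 𝒳 → Fin C → ℝ) (hf : Measurable f)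
    (Ω : ℝ) (hΩ : 0 ≤ Ω) (hB : ∀ x i, |f x i| ≤ Ω) :
    |∑ k, ((n k : ℝ) / (∑ j, (n j : ℝ))) * risk ν f (p k) - risk ν f q|
      ≤ Ω * ∑ k, ((n k : ℝ) / (∑ j, (n j : ℝ))) *
          ∫ x, ∑ i, |p k x i - q x i| ∂ν :=
  generalization_error_bound_general ν N hN p q hpm hqm hp0 hq0 hp1 hq1 n hn f hf Ω hΩ hB
end

section
/- (Path-norm proxy bounds the output of a ReLU network.) For an L-layer ReLU network with parameters θ = (θ_0, …, θ_L) and any input x ∈ ℝ^{d_0} with |x_i| ≤ 1 for every coordinate i, every output component satisfies |f_k(x; θ)| ≤ ‖f(·; θ)‖_pnp, where ‖f(·; θ)‖_pnp is the path-norm proxy of the network. -/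
/-!
Replacing every weight by its absolute value and dropping the ReLUs can only increase the size
of the pre-activations, because `|σ t| ≤ |t|` and `|x i| ≤ 1`: each `|a_l j|` is bounded by the
corresponding activation of the linear network with weights `|θ|` on the all-ones input. Expanding
that linear network as a sum over paths, its outputs add up to exactly the path-norm proxy, and
they are nonnegative, so each one is at most their sum.
-/

open Finset

/-- Pre-activations of a ReLU network with layer widths `d` and parameters `θ`
(`θ l i j` is the weight of the edge from node `i` of layer `l` to node `j` of
layer `l+1`) on input `x`.  `preact d θ x l` is the pre-activation vector
`a_{l+1}` of layer `l+1` (paper indexing): `a_1 j = ∑ i, θ 0 i j * x i` and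
`a_{l+2} j = ∑ i, θ (l+1) i j * σ (a_{l+1} i)` where `σ t = max 0 t` is ReLU.
For an `L`-layer network (`L ≥ 1`) the `k`-th output is
`f_k(x; θ) = ∑ i, θ L i k * σ (a_L i) = preact d θ x L k`. -/
noncomputable def preact (d : ℕ → ℕ) (θ : ∀ l : ℕ, Fin (d l) → Fin (d (l + 1)) → ℝ)
    (x : Fin (d 0) → ℝ) : (l : ℕ) → Fin (d (l + 1)) → ℝ
  | 0 => fun j => ∑ i, θ 0 i j * x i
  | (l + 1) => fun j => ∑ i, θ (l + 1) i j * max 0 (preact d θ x l i)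

/-- The path-norm proxy of an `L`-layer ReLU network:
`‖f(·; θ)‖_pnp = ∑_{(i_0, …, i_{L+1})} ∏_{l=0}^{L} |θ_l(i_l, i_{l+1})|`,
the sum ranging over all paths through the network. -/
noncomputable def pathNormProxy (L : ℕ) (d : ℕ → ℕ)
    (θ : ∀ l : ℕ, Fin (d l) → Fin (d (l + 1)) → ℝ) : ℝ :=
  ∑ i : (l : Fin (L + 2)) → Fin (d l), ∏ l : Fin (L + 1), |θ l (i l.castSucc) (i l.succ)|

namespace ReLUNetwork

variable {d : ℕ → ℕ} {R : Type*}

/-- Activations of the network with weights `A` and no activation function on input `v`;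
unlike `preact`, `linearNetwork A v l` is indexed by its own layer `l`. -/
def linearNetwork [Semiring R] (A : ∀ l : ℕ, Fin (d l) → Fin (d (l + 1)) → R)
    (v : Fin (d 0) → R) : (l : ℕ) → Fin (d l) → R
  | 0 => v
  | l + 1 => fun j => ∑ i, A l i j * linearNetwork A v l i

theorem linearNetwork_nonneg [Semiring R] [PartialOrder R] [IsOrderedRing R]
    {A : ∀ l : ℕ, Fin (d l) → Fin (d (l + 1)) → R} {v : Fin (d 0) → R}
    (hA : ∀ l i j, 0 ≤ A l i j) (hv : ∀ i, 0 ≤ v i) : ∀ l j, 0 ≤ linearNetwork A v l j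
  | 0, j => hv j
  | l + 1, _ => sum_nonneg fun i _ =>
      mul_nonneg (hA l i _) (linearNetwork_nonneg hA hv l i)

/-- The bilinear form `wᵀ Aₙ₋₁ ⋯ A₀ v` expanded as a sum over all paths through the first
`n + 1` layers. -/
theorem sum_paths_eq_sum_linearNetwork_mul [CommSemiring R]
    (A : ∀ l : ℕ, Fin (d l) → Fin (d (l + 1)) → R) (v : Fin (d 0) → R) :
    ∀ (n : ℕ) (w : Fin (d n) → R),
      ∑ q : (l : Fin (n + 1)) → Fin (d l),
          v (q 0) * (∏ l : Fin n, A l (q l.castSucc) (q l.succ)) * w (q (Fin.last n)) =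
        ∑ i, linearNetwork A v n i * w i
  | 0, w => by
    simpa [linearNetwork] using Fintype.sum_equiv (Equiv.piUnique fun l : Fin 1 => Fin (d l)) _
      (fun i => v i * w i) fun _ => rfl
  | n + 1, w => by
    rw [← (Fin.snocEquiv fun l : Fin (n + 2) => Fin (d l)).sum_comp,
      Fintype.sum_prod_type_right]
    simp only [Fin.snocEquiv_apply, Fin.prod_univ_castSucc, Fin.succ_castSucc, Fin.snoc_castSucc,
      Fin.succ_last, Fin.snoc_last, Fin.val_castSucc, Fin.val_last]
    have hfirst (q : (l : Fin (n + 1)) → Fin (d l)) (j : Fin (d (n + 1))) :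
        Fin.snoc (α := fun l : Fin (n + 2) => Fin (d l)) q j 0 = q 0 :=
      Fin.snoc_castSucc (α := fun l : Fin (n + 2) => Fin (d l)) (p := q) (x := j) (i := 0)
    simp only [hfirst]
    calc _ = ∑ q : (l : Fin (n + 1)) → Fin (d l),
          v (q 0) * (∏ l : Fin n, A l (q l.castSucc) (q l.succ)) *
            ∑ j, A n (q (Fin.last n)) j * w j := by
          simp only [mul_sum, mul_assoc]
      _ = _ := sum_paths_eq_sum_linearNetwork_mul A v n fun i => ∑ j, A n i j * w j
      _ = _ := by
          simp only [linearNetwork, sum_mul, mul_sum]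
          rw [sum_comm]
          exact sum_congr rfl fun _ _ => sum_congr rfl fun _ _ => by ring

theorem abs_preact_le_linearNetwork (θ : ∀ l : ℕ, Fin (d l) → Fin (d (l + 1)) → ℝ)
    {x v : Fin (d 0) → ℝ} (hx : ∀ i, |x i| ≤ v i) :
    ∀ l j, |preact d θ x l j| ≤ linearNetwork (fun l i j => |θ l i j|) v (l + 1) j
  | 0, j => by
    refine (abs_sum_le_sum_abs _ _).trans (sum_le_sum fun i _ => ?_)
    rw [abs_mul]
    exact mul_le_mul_of_nonneg_left (hx i) (abs_nonneg _)
  | l + 1, j => by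
    refine (abs_sum_le_sum_abs _ _).trans (sum_le_sum fun i _ => ?_)
    rw [abs_mul]
    refine mul_le_mul_of_nonneg_left ?_ (abs_nonneg _)
    calc |max 0 (preact d θ x l i)| ≤ |preact d θ x l i| := by
          rw [abs_of_nonneg (le_max_left _ _)]
          exact max_le (abs_nonneg _) (le_abs_self _)
      _ ≤ _ := abs_preact_le_linearNetwork θ hx l i

theorem pathNormProxy_eq_sum_linearNetwork (L : ℕ)
    (θ : ∀ l : ℕ, Fin (d l) → Fin (d (l + 1)) → ℝ) :
    pathNormProxy L d θ = ∑ i, linearNetwork (fun l i j => |θ l i j|) 1 (L + 1) i := by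
  have := sum_paths_eq_sum_linearNetwork_mul (fun l i j => |θ l i j|) (fun _ => 1) (L + 1) 1
  simp only [one_mul, Pi.one_apply, mul_one] at this
  exact this

end ReLUNetwork

open ReLUNetwork in
theorem relu_output_le_pathNormProxy_general (L : ℕ) (d : ℕ → ℕ)
    (θ : ∀ l : ℕ, Fin (d l) → Fin (d (l + 1)) → ℝ)
    (x : Fin (d 0) → ℝ) (hx : ∀ i, |x i| ≤ 1) (k : Fin (d (L + 1))) :
    |preact d θ x L k| ≤ pathNormProxy L d θ := by
  have hnonneg := linearNetwork_nonneg (fun l i j => abs_nonneg (θ l i j)) fun _ => zero_le_one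
  calc |preact d θ x L k| ≤ linearNetwork (fun l i j => |θ l i j|) 1 (L + 1) k :=
        abs_preact_le_linearNetwork θ hx L k
    _ ≤ ∑ i, linearNetwork (fun l i j => |θ l i j|) 1 (L + 1) i :=
        single_le_sum (fun i _ => hnonneg (L + 1) i) (mem_univ k)
    _ = pathNormProxy L d θ := (pathNormProxy_eq_sum_linearNetwork L θ).symm

/-- **Theorem (the path-norm proxy bounds the output of a ReLU network).**
For an `L`-layer ReLU network (`L ≥ 1`) and any input `x` with `|x i| ≤ 1` for every
coordinate `i`, every output component satisfies `|f_k(x; θ)| ≤ ‖f(·; θ)‖_pnp`. -/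
theorem relu_output_le_pathNormProxy (L : ℕ) (hL : 1 ≤ L) (d : ℕ → ℕ)
    (θ : ∀ l : ℕ, Fin (d l) → Fin (d (l + 1)) → ℝ)
    (x : Fin (d 0) → ℝ) (hx : ∀ i, |x i| ≤ 1) (k : Fin (d (L + 1))) :
    |preact d θ x L k| ≤ pathNormProxy L d θ :=
  relu_output_le_pathNormProxy_general L d θ x hx k
end
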